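/- Let p : [0,1] → ℝ be continuous and strictly positive, let λ, ν ∈ ℝ, let α, β ∈ ℝ, and let u, v : [0,1] → ℝ be twice continuously differentiable, strictly positive on (0,1), both satisfying BC(α,β), with −u''(x) = λ·p(x)·u(x) and −v''(x) = ν·v(x) for all x ∈ [0,1]. Then there exists x₀ ∈ [0,1] such that λ·p(x₀) = ν. -/

import Mathlib

open Real

/-- Separated boundary conditions BC(α,β) on [0,1]. -/
def BC (α β : ℝ) (w : ℝ → ℝ) : Prop :=
  w 0 * Real.cos α + deriv w 0 * Real.sin α = 0 ∧
  w 1 * Real.cos β + deriv w 1 * Real.sin β = 0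

/-!
The Wronskian `W = u v' - u' v` vanishes at both endpoints, because at each endpoint the vectors
`(u, u')` and `(v, v')` are both orthogonal to the nonzero vector `(cos γ, sin γ)`. By Rolle's
theorem `W' = u v'' - u'' v = (l p - ν) u v` vanishes at some interior point, where `u v > 0`.
-/

theorem mul_sub_mul_eq_zero_of_mul_cos_add_mul_sin_eq_zero {γ a b c d : ℝ}
    (hab : a * cos γ + b * sin γ = 0) (hcd : c * cos γ + d * sin γ = 0) :
    a * d - b * c = 0 := by
  linear_combination (d * cos γ - c * sin γ) * hab + (a * sin γ - b * cos γ) * hcd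
    - (a * d - b * c) * sin_sq_add_cos_sq γ

noncomputable def wronskian (u v : ℝ → ℝ) (x : ℝ) : ℝ :=
  u x * deriv v x - deriv u x * v x

theorem hasDerivAt_wronskian {u v : ℝ → ℝ} {x : ℝ} (hu : DifferentiableAt ℝ u x)
    (hv : DifferentiableAt ℝ v x) (hu' : DifferentiableAt ℝ (deriv u) x)
    (hv' : DifferentiableAt ℝ (deriv v) x) :
    HasDerivAt (wronskian u v) (u x * deriv (deriv v) x - deriv (deriv u) x * v x) x := by
  exact ((hu.hasDerivAt.mul hv'.hasDerivAt).sub (hu'.hasDerivAt.mul hv.hasDerivAt)).congr_deriv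
    (by ring)

theorem exists_wronskian_deriv_eq_zero {u v : ℝ → ℝ} (hu : ContDiff ℝ 2 u) (hv : ContDiff ℝ 2 v)
    {a b : ℝ} (hab : a < b) (hW : wronskian u v a = wronskian u v b) :
    ∃ c ∈ Set.Ioo a b, u c * deriv (deriv v) c - deriv (deriv u) c * v c = 0 := by
  have hu' : ContDiff ℝ 1 (deriv u) := hu.iterate_deriv' 1 1
  have hv' : ContDiff ℝ 1 (deriv v) := hv.iterate_deriv' 1 1
  have hderiv : ∀ x, HasDerivAt (wronskian u v)
      (u x * deriv (deriv v) x - deriv (deriv u) x * v x) x := fun x =>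
    hasDerivAt_wronskian (hu.differentiable two_ne_zero x) (hv.differentiable two_ne_zero x)
      (hu'.differentiable one_ne_zero x) (hv'.differentiable one_ne_zero x)
  exact exists_hasDerivAt_eq_zero hab
    (HasDerivAt.continuousOn fun x _ => hderiv x) hW fun x _ => hderiv x

theorem wronskian_eq_zero_of_BC_left {α β : ℝ} {u v : ℝ → ℝ} (hu : BC α β u) (hv : BC α β v) :
    wronskian u v 0 = 0 :=
  mul_sub_mul_eq_zero_of_mul_cos_add_mul_sin_eq_zero hu.1 hv.1

theorem wronskian_eq_zero_of_BC_right {α β : ℝ} {u v : ℝ → ℝ} (hu : BC α β u) (hv : BC α β v) :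
    wronskian u v 1 = 0 :=
  mul_sub_mul_eq_zero_of_mul_cos_add_mul_sin_eq_zero hu.2 hv.2

theorem stmt_8_general (p : ℝ → ℝ)
    (l ν α β : ℝ) (u v : ℝ → ℝ)
    (hu : ContDiff ℝ 2 u) (hv : ContDiff ℝ 2 v)
    (hupos : ∀ x ∈ Set.Ioo (0:ℝ) 1, 0 < u x)
    (hvpos : ∀ x ∈ Set.Ioo (0:ℝ) 1, 0 < v x)
    (hubc : BC α β u) (hvbc : BC α β v)
    (huode : ∀ x ∈ Set.Icc (0:ℝ) 1, -(deriv (deriv u) x) = l * p x * u x)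
    (hvode : ∀ x ∈ Set.Icc (0:ℝ) 1, -(deriv (deriv v) x) = ν * v x) :
    ∃ x₀ ∈ Set.Icc (0:ℝ) 1, l * p x₀ = ν := by
  obtain ⟨c, hc, hWc⟩ := exists_wronskian_deriv_eq_zero hu hv zero_lt_one
    ((wronskian_eq_zero_of_BC_left hubc hvbc).trans (wronskian_eq_zero_of_BC_right hubc hvbc).symm)
  have hc' := Set.Ioo_subset_Icc_self hc
  have key : (l * p c - ν) * (u c * v c) = 0 := by
    linear_combination hWc - v c * huode c hc' + u c * hvode c hc'
  refine ⟨c, hc', sub_eq_zero.mp ?_⟩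
  exact (mul_eq_zero.mp key).resolve_right (mul_pos (hupos c hc) (hvpos c hc)).ne'

/-- Mean-value form underlying Theorem 3.2: there is x₀ ∈ [0,1] with λ p(x₀) = ν. -/
theorem stmt_8 (p : ℝ → ℝ) (hp : Continuous p)
    (hppos : ∀ x ∈ Set.Icc (0:ℝ) 1, 0 < p x)
    (l ν α β : ℝ) (u v : ℝ → ℝ)
    (hu : ContDiff ℝ 2 u) (hv : ContDiff ℝ 2 v)
    (hupos : ∀ x ∈ Set.Ioo (0:ℝ) 1, 0 < u x)
    (hvpos : ∀ x ∈ Set.Ioo (0:ℝ) 1, 0 < v x)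
    (hubc : BC α β u) (hvbc : BC α β v)
    (huode : ∀ x ∈ Set.Icc (0:ℝ) 1, -(deriv (deriv u) x) = l * p x * u x)
    (hvode : ∀ x ∈ Set.Icc (0:ℝ) 1, -(deriv (deriv v) x) = ν * v x) :
    ∃ x₀ ∈ Set.Icc (0:ℝ) 1, l * p x₀ = ν :=
  stmt_8_general p l ν α β u v hu hv hupos hvpos hubc hvbc huode hvode
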